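/- arXiv:1112.1346 — 2 statements merged into one kernel-verified Lean document; each statement's English description precedes it below -/
import Mathlib

section
/- For every bilinear form h on an n-dimensional real inner product space (V,g) and every 1 ≤ k ≤ n, the characteristic coefficient s_k(h) is given by s_k(h) = (1/(k!(n−k)!))·*(g^{n−k}h^k), where g^{n−k}h^k is the exterior product of double forms; equivalently, det(h−λg) = Σ_{i=0}^n (−1)^{n−i} ((1/(i!(n−i)!))·*(g^{n−i}h^i)) λ^{n−i} for all λ ∈ ℝ. -/
noncomputable section

open Finset

/-- Double forms over an `n`-dimensional real inner product space, described by their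
coefficients in a fixed orthonormal basis: a `(p,q)`-double form corresponds to a function
supported on pairs of subsets of cardinalities `p` and `q`. -/
abbrev DForm (n : ℕ) := Finset (Fin n) → Finset (Fin n) → ℝ

namespace DForm

variable {n : ℕ}

/-- Sign of the shuffle placing the elements of `A` (in increasing order) before
those of `B` (in increasing order). -/
def shuffleSign (A B : Finset (Fin n)) : ℝ :=
  (-1 : ℝ) ^ (∑ x ∈ B, (A.filter fun a => x < a).card)

/-- The exterior product of double forms. -/
def wedge (ω₁ ω₂ : DForm n) : DForm n := fun I J =>
  ∑ A ∈ I.powerset, ∑ B ∈ J.powerset,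
    shuffleSign A (I \ A) * shuffleSign B (J \ B) * ω₁ A B * ω₂ (I \ A) (J \ B)

/-- Exterior powers `ω^k` of a double form. -/
def dpow (ω : DForm n) : ℕ → DForm n
  | 0 => fun I J => if I = ∅ ∧ J = ∅ then 1 else 0
  | k + 1 => wedge ω (dpow ω k)

/-- The double Hodge star operator. -/
def hstar (ω : DForm n) : DForm n := fun I J =>
  shuffleSign Iᶜ I * shuffleSign Jᶜ J * ω Iᶜ Jᶜ

/-- The contraction `c` of double forms. -/
def contr (ω : DForm n) : DForm n := fun I J =>
  ∑ j : Fin n,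
    if j ∈ I ∨ j ∈ J then 0
    else shuffleSign {j} I * shuffleSign {j} J * ω (insert j I) (insert j J)

/-- Iterated contraction `c^k`. -/
def citer (ω : DForm n) : ℕ → DForm n
  | 0 => ω
  | k + 1 => contr (citer ω k)

/-- The inner product of double forms. -/
def dinner (ω₁ ω₂ : DForm n) : ℝ :=
  ∑ I : Finset (Fin n), ∑ J : Finset (Fin n), ω₁ I J * ω₂ I J

/-- The transpose `ω^t` of a double form. -/
def transp (ω : DForm n) : DForm n := fun I J => ω J I

/-- The composition (Greub) product `ω₁ ∘ ω₂` of double forms. -/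
def comp (ω₁ ω₂ : DForm n) : DForm n := fun I J =>
  ∑ K : Finset (Fin n), ω₂ I K * ω₁ K J

/-- The scalar value of a `(0,0)`-double form. -/
def toScalar (ω : DForm n) : ℝ := ω ∅ ∅

/-- The metric, as a `(1,1)`-double form. -/
def gMetric (n : ℕ) : DForm n := fun I J => if I = J ∧ I.card = 1 then 1 else 0

/-- Iterated composition power `ω^{∘r}` of a `(1,1)`-double form, with `ω^{∘0} = g`. -/
def cpow (ω : DForm n) : ℕ → DForm n
  | 0 => gMetric n
  | r + 1 => comp ω (cpow ω r)

/-- The `(1,1)`-double form associated to a bilinear form, given by its matrix in the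
orthonormal basis. -/
def ofMatrix (h : Matrix (Fin n) (Fin n) ℝ) : DForm n := fun I J =>
  ∑ i : Fin n, ∑ j : Fin n, if I = {i} ∧ J = {j} then h i j else 0

/-- `ω` is a `(p,q)`-double form. -/
def IsOfDeg (ω : DForm n) (p q : ℕ) : Prop :=
  ∀ I J : Finset (Fin n), ω I J ≠ 0 → I.card = p ∧ J.card = q

/-- `ω` is a symmetric double form. -/
def IsSym (ω : DForm n) : Prop := ∀ I J, ω I J = ω J I

/-- The sign relating `e_{v 0} ∧ ⋯ ∧ e_{v (p-1)}` to the corresponding increasing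
basis `p`-vector (and `0` if the indices are not pairwise distinct). -/
def tupleSign {p : ℕ} (v : Fin p → Fin n) : ℝ :=
  if Function.Injective v then (((Equiv.Perm.sign (Tuple.sort v)) : ℤ) : ℝ) else 0

/-- Evaluation of a double form on wedges of basis vectors indexed by arbitrary tuples. -/
def evalT (ω : DForm n) {p q : ℕ} (v : Fin p → Fin n) (w : Fin q → Fin n) : ℝ :=
  tupleSign v * tupleSign w * ω (Finset.image v Finset.univ) (Finset.image w Finset.univ)

/-- The first Bianchi identity for a `(2,2)`-double form:
`R(x∧y,z∧t) + R(y∧z,x∧t) + R(z∧x,y∧t) = 0`. -/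
def Bianchi2 (R : DForm n) : Prop :=
  ∀ x y z t : Fin n,
    evalT R ![x, y] ![z, t] + evalT R ![y, z] ![x, t] + evalT R ![z, x] ![y, t] = 0

/-- The first Bianchi identity for a `(p,p)`-double form. -/
def FirstBianchi (ω : DForm n) (p : ℕ) : Prop :=
  ∀ (x : Fin (p + 1) → Fin n) (y : Fin (p - 1) → Fin n),
    ∑ j : Fin (p + 1),
      (-1 : ℝ) ^ (j : ℕ) * evalT ω (x ∘ Fin.succAbove j) (Fin.cons (x j) y) = 0

/-- The characteristic coefficient `s_k(h)` of a bilinear form `h`, defined through the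
characteristic polynomial: `det(h - λ g) = ∑ (-1)^(n-i) s_i(h) λ^(n-i)`. -/
def sInv (h : Matrix (Fin n) (Fin n) ℝ) (k : ℕ) : ℝ :=
  (-1 : ℝ) ^ k * (Matrix.charpoly h).coeff (n - k)

/-- The `k`-th cofactor (Newton) transformation `t_k(h) = (1/(k!(n-1-k)!)) *(g^{n-1-k} h^k)`. -/
def tInv (h : Matrix (Fin n) (Fin n) ℝ) (k : ℕ) : DForm n :=
  ((k.factorial * (n - 1 - k).factorial : ℕ) : ℝ)⁻¹ •
    hstar (wedge (dpow (gMetric n) (n - 1 - k)) (dpow (ofMatrix h) k))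

/-- The `(r,q)`-cofactor `s_{(r,q)}(h) = (1/(q!(n-q-r)!)) *(g^{n-q-r} h^q)`. -/
def sCof (h : Matrix (Fin n) (Fin n) ℝ) (r q : ℕ) : DForm n :=
  ((q.factorial * (n - q - r).factorial : ℕ) : ℝ)⁻¹ •
    hstar (wedge (dpow (gMetric n) (n - q - r)) (dpow (ofMatrix h) q))

end DForm
/-!
Expanding `h^k` one factor at a time and comparing with the Laplace expansion of determinants
shows `h^k(e_I, e_J) = k! · det h[I, J]` for `|I| = |J| = k`; for `h = g` this is `m! · δ_{AB}`.
Hence in `(g^{n-k} h^k)(e_1 ∧ ⋯ ∧ e_n, e_1 ∧ ⋯ ∧ e_n)` only the splittings with equal row and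
column blocks survive, each with a squared sign, and the value is `k! (n-k)!` times the sum of
the principal `k × k` minors of `h`, which is `s_k(h)`. The polynomial identity is then the
expansion of `det (h - λ g) = (-1)^n χ_h(λ)` in the coefficients of the characteristic
polynomial.
-/

namespace Finset

section LinearOrder

variable {α : Type*} [LinearOrder α]

theorem sum_orderEmbOfFin {M : Type*} [AddCommMonoid M] (s : Finset α) {k : ℕ} (h : #s = k)
    (f : α → M) : ∑ a, f (s.orderEmbOfFin h a) = ∑ x ∈ s, f x := by
  generalize he : s.orderEmbOfFin h = e
  rw [← map_orderEmbOfFin_univ s h, he, sum_map]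
  rfl

theorem card_filter_lt_orderEmbOfFin (s : Finset α) {k : ℕ} (h : #s = k) (a : Fin k) :
    #(s.filter (· < s.orderEmbOfFin h a)) = a := by
  have hs := map_orderEmbOfFin_univ s h
  generalize s.orderEmbOfFin h = e at hs
  rw [← hs, filter_map, card_map]
  simp [filter_gt_eq_Iio]

theorem orderEmbOfFin_erase (s : Finset α) {k : ℕ} (h : #s = k + 1) (r : Fin (k + 1))
    (h' : #(s.erase (s.orderEmbOfFin h r)) = k) :
    ⇑((s.erase (s.orderEmbOfFin h r)).orderEmbOfFin h') = s.orderEmbOfFin h ∘ r.succAbove := by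
  refine (orderEmbOfFin_unique h' (fun a => mem_erase.2 ⟨?_, orderEmbOfFin_mem _ _ _⟩)
    ((s.orderEmbOfFin h).strictMono.comp (Fin.strictMono_succAbove r))).symm
  exact fun hEq => r.succAbove_ne a ((s.orderEmbOfFin h).injective hEq)

end LinearOrder

theorem sum_powerset_eq_sum_singleton {α M : Type*} [AddCommMonoid M] (s : Finset α)
    (f : Finset α → M) (hf : ∀ A ⊆ s, #A ≠ 1 → f A = 0) :
    ∑ A ∈ s.powerset, f A = ∑ x ∈ s, f {x} := by
  rw [← sum_subset (powersetCard_eq_filter (n := 1) ▸ filter_subset _ _) ?_, powersetCard_one,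
    sum_map]
  · rfl
  · intro A hA hA1
    exact hf A (mem_powerset.1 hA) fun h => hA1 (mem_powersetCard.2 ⟨mem_powerset.1 hA, h⟩)

theorem sum_powersetCard_compl {α M : Type*} [DecidableEq α] [Fintype α] [AddCommMonoid M]
    (f : Finset α → M) {m : ℕ} (hm : m ≤ Fintype.card α) :
    ∑ A ∈ powersetCard m univ, f Aᶜ = ∑ T ∈ powersetCard (Fintype.card α - m) univ, f T := by
  refine sum_nbij' compl compl ?_ ?_ (fun A _ => compl_compl A) (fun A _ => compl_compl A)
    (fun _ _ => rfl) <;> intro A hA <;> simp only [mem_powersetCard, subset_univ, true_and,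
      card_compl] at hA ⊢ <;> omega

end Finset

namespace Matrix

variable {α R : Type*} [LinearOrder α] [CommRing R]

def minorOfCard (M : Matrix α α R) (k : ℕ) (I J : Finset α) : R :=
  if h : #I = k ∧ #J = k then
    (M.submatrix (I.orderEmbOfFin h.1) (J.orderEmbOfFin h.2)).det
  else 0

theorem minorOfCard_of_card (M : Matrix α α R) {k : ℕ} {I J : Finset α} (hI : #I = k)
    (hJ : #J = k) :
    M.minorOfCard k I J = (M.submatrix (I.orderEmbOfFin hI) (J.orderEmbOfFin hJ)).det :=
  dif_pos ⟨hI, hJ⟩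

theorem minorOfCard_of_not_card (M : Matrix α α R) {k : ℕ} {I J : Finset α}
    (h : ¬(#I = k ∧ #J = k)) : M.minorOfCard k I J = 0 :=
  dif_neg h

theorem minorOfCard_zero (M : Matrix α α R) (I J : Finset α) :
    M.minorOfCard 0 I J = if I = ∅ ∧ J = ∅ then 1 else 0 := by
  simp only [minorOfCard, Finset.card_eq_zero]
  split_ifs <;> simp

theorem minorOfCard_self (M : Matrix α α R) {k : ℕ} {s : Finset α} (hs : #s = k) :
    M.minorOfCard k s s = (M.submatrix (Subtype.val : s → α) Subtype.val).det := by
  rw [minorOfCard_of_card M hs hs, ← det_submatrix_equiv_self (s.orderIsoOfFin hs).toEquiv]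
  rfl

theorem minorOfCard_one (k : ℕ) (I J : Finset α) :
    (1 : Matrix α α R).minorOfCard k I J = if #I = k ∧ I = J then 1 else 0 := by
  by_cases h : #I = k ∧ #J = k
  · obtain ⟨hI, hJ⟩ := h
    rw [minorOfCard_of_card _ hI hJ]
    by_cases hIJ : I = J
    · subst hIJ
      rw [if_pos ⟨hI, rfl⟩]
      exact (congrArg det (submatrix_one_embedding (I.orderEmbOfFin hI).toEmbedding)).trans det_one
    · rw [if_neg fun h => hIJ h.2]
      obtain ⟨i, hiI, hiJ⟩ : ∃ i ∈ I, i ∉ J := Finset.not_subset.1 fun hsub =>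
        hIJ (Finset.eq_of_subset_of_card_le hsub (hJ.trans hI.symm).le)
      obtain ⟨a, rfl⟩ : ∃ a, I.orderEmbOfFin hI a = i := by
        rw [← Set.mem_range, Finset.range_orderEmbOfFin]
        exact hiI
      exact det_eq_zero_of_row_eq_zero a fun b =>
        one_apply_ne fun hab => hiJ (hab ▸ Finset.orderEmbOfFin_mem J hJ b)
  · rw [minorOfCard_of_not_card _ h, if_neg]
    rintro ⟨hk, rfl⟩
    exact h ⟨hk, hk⟩

theorem minorOfCard_erase_erase (M : Matrix α α R) {k : ℕ} {I J : Finset α}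
    (hI : #I = k + 1) (hJ : #J = k + 1) (a b : Fin (k + 1)) :
    M.minorOfCard k (I.erase (I.orderEmbOfFin hI a)) (J.erase (J.orderEmbOfFin hJ b)) =
      ((M.submatrix (I.orderEmbOfFin hI) (J.orderEmbOfFin hJ)).submatrix
        a.succAbove b.succAbove).det := by
  have hIa : #(I.erase (I.orderEmbOfFin hI a)) = k := by
    rw [Finset.card_erase_of_mem (Finset.orderEmbOfFin_mem I hI a), hI, Nat.add_sub_cancel]
  have hJb : #(J.erase (J.orderEmbOfFin hJ b)) = k := by
    rw [Finset.card_erase_of_mem (Finset.orderEmbOfFin_mem J hJ b), hJ, Nat.add_sub_cancel]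
  rw [minorOfCard_of_card M hIa hJb, Finset.orderEmbOfFin_erase I hI a hIa,
    Finset.orderEmbOfFin_erase J hJ b hJb]
  rfl

-- Laplace expansion along each row, summed over the `k + 1` rows.
theorem succ_mul_minorOfCard_succ (M : Matrix α α R) (k : ℕ) (I J : Finset α) :
    (k + 1 : R) * M.minorOfCard (k + 1) I J = ∑ i ∈ I, ∑ j ∈ J,
      (-1) ^ (#(I.filter (· < i)) + #(J.filter (· < j))) * M i j *
        M.minorOfCard k (I.erase i) (J.erase j) := by
  by_cases h : #I = k + 1 ∧ #J = k + 1
  · obtain ⟨hI, hJ⟩ := h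
    have hrow (a : Fin (k + 1)) : ∑ b : Fin (k + 1), (-1) ^ ((a : ℕ) + b) *
        M (I.orderEmbOfFin hI a) (J.orderEmbOfFin hJ b) *
          ((M.submatrix (I.orderEmbOfFin hI) (J.orderEmbOfFin hJ)).submatrix
            a.succAbove b.succAbove).det =
        (M.submatrix (I.orderEmbOfFin hI) (J.orderEmbOfFin hJ)).det :=
      (det_succ_row (M.submatrix (I.orderEmbOfFin hI) (J.orderEmbOfFin hJ)) a).symm
    rw [minorOfCard_of_card M hI hJ, ← Finset.sum_orderEmbOfFin I hI]
    simp only [← Finset.sum_orderEmbOfFin J hJ, Finset.card_filter_lt_orderEmbOfFin,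
      minorOfCard_erase_erase M hI hJ, hrow, Finset.sum_const, Finset.card_univ,
      Fintype.card_fin, nsmul_eq_mul]
    push_cast
    rfl
  · rw [minorOfCard_of_not_card M h, mul_zero]
    refine (Finset.sum_eq_zero fun i hi => Finset.sum_eq_zero fun j hj => ?_).symm
    rw [minorOfCard_of_not_card M, mul_zero]
    rw [Finset.card_erase_of_mem hi, Finset.card_erase_of_mem hj]
    have := Finset.card_pos.2 ⟨i, hi⟩
    have := Finset.card_pos.2 ⟨j, hj⟩
    omega

end Matrix

open scoped Nat

namespace DForm

variable {n : ℕ}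

theorem shuffleSign_mul_self (A B : Finset (Fin n)) : shuffleSign A B * shuffleSign A B = 1 := by
  rw [shuffleSign, ← pow_add, ← two_mul, pow_mul, neg_one_sq, one_pow]

theorem shuffleSign_singleton_erase (i : Fin n) (I : Finset (Fin n)) :
    shuffleSign {i} (I.erase i) = (-1) ^ #(I.filter (· < i)) := by
  rw [shuffleSign, card_filter,
    ← sum_erase I (f := fun x => if x < i then (1 : ℕ) else 0) (a := i) (by simp)]
  congr 1
  refine sum_congr rfl fun x _ => ?_
  rw [filter_singleton]
  split_ifs <;> rfl

theorem toScalar_hstar (ω : DForm n) : toScalar (hstar ω) = ω univ univ := by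
  simp [toScalar, hstar, shuffleSign]

theorem ofMatrix_singleton (M : Matrix (Fin n) (Fin n) ℝ) (i j : Fin n) :
    ofMatrix M {i} {j} = M i j := by
  simp [ofMatrix, ite_and]

theorem ofMatrix_of_not_card (M : Matrix (Fin n) (Fin n) ℝ) {A B : Finset (Fin n)}
    (h : ¬(#A = 1 ∧ #B = 1)) : ofMatrix M A B = 0 := by
  refine sum_eq_zero fun i _ => sum_eq_zero fun j _ => if_neg ?_
  rintro ⟨rfl, rfl⟩
  exact h ⟨card_singleton i, card_singleton j⟩

theorem gMetric_eq_ofMatrix_one : gMetric n = ofMatrix 1 := by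
  funext I J
  by_cases h : #I = 1 ∧ #J = 1
  · obtain ⟨i, rfl⟩ := card_eq_one.1 h.1
    obtain ⟨j, rfl⟩ := card_eq_one.1 h.2
    simp [gMetric, ofMatrix_singleton, Matrix.one_apply]
  · rw [ofMatrix_of_not_card _ h, gMetric, if_neg]
    rintro ⟨rfl, h1⟩
    exact h ⟨h1, h1⟩

theorem wedge_ofMatrix (M : Matrix (Fin n) (Fin n) ℝ) (ω : DForm n) (I J : Finset (Fin n)) :
    wedge (ofMatrix M) ω I J = ∑ i ∈ I, ∑ j ∈ J,
      shuffleSign {i} (I.erase i) * shuffleSign {j} (J.erase j) * M i j *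
        ω (I.erase i) (J.erase j) := by
  rw [wedge, sum_powerset_eq_sum_singleton]
  · refine sum_congr rfl fun i _ => ?_
    rw [sum_powerset_eq_sum_singleton]
    · simp only [sdiff_singleton_eq_erase, ofMatrix_singleton]
    · intro B _ hB
      rw [ofMatrix_of_not_card M fun h => hB h.2, mul_zero, zero_mul]
  · intro A _ hA
    exact sum_eq_zero fun B _ => by
      rw [ofMatrix_of_not_card M fun h => hA h.1, mul_zero, zero_mul]

theorem dpow_ofMatrix (M : Matrix (Fin n) (Fin n) ℝ) (k : ℕ) (I J : Finset (Fin n)) :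
    dpow (ofMatrix M) k I J = k ! * M.minorOfCard k I J := by
  induction k generalizing I J with
  | zero => simp [dpow, Matrix.minorOfCard_zero]
  | succ k ih =>
    rw [dpow, wedge_ofMatrix, Nat.factorial_succ, Nat.cast_mul, mul_comm ((k + 1 : ℕ) : ℝ),
      mul_assoc, Nat.cast_succ, Matrix.succ_mul_minorOfCard_succ, mul_sum]
    refine sum_congr rfl fun i _ => ?_
    rw [mul_sum]
    refine sum_congr rfl fun j _ => ?_
    rw [ih, shuffleSign_singleton_erase, shuffleSign_singleton_erase, pow_add]
    ring

theorem dpow_gMetric (m : ℕ) (A B : Finset (Fin n)) :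
    dpow (gMetric n) m A B = m ! * if #A = m ∧ A = B then 1 else 0 := by
  rw [gMetric_eq_ofMatrix_one, dpow_ofMatrix, Matrix.minorOfCard_one]

theorem wedge_dpow_gMetric_univ {m : ℕ} (hm : m ≤ n) (ω : DForm n) :
    wedge (dpow (gMetric n) m) ω univ univ = m ! * ∑ T ∈ powersetCard (n - m) univ, ω T T := by
  have hdiag (A : Finset (Fin n)) : ∑ B ∈ univ.powerset,
      shuffleSign A (univ \ A) * shuffleSign B (univ \ B) * dpow (gMetric n) m A B *
        ω (univ \ A) (univ \ B) = if #A = m then m ! * ω Aᶜ Aᶜ else 0 := by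
    rw [sum_eq_single_of_mem A (mem_powerset.2 (subset_univ A))]
    · rw [dpow_gMetric, ← compl_eq_univ_sdiff]
      simp only [and_true]
      split_ifs
      · linear_combination (m ! * ω Aᶜ Aᶜ) * shuffleSign_mul_self A Aᶜ
      · ring
    · intro B _ hBA
      rw [dpow_gMetric, if_neg fun h => hBA h.2.symm]
      ring
  rw [wedge, sum_congr rfl fun A _ => hdiag A, ← sum_filter, ← powersetCard_eq_filter, ← mul_sum,
    sum_powersetCard_compl (fun T => ω T T) (by simpa using hm), Fintype.card_fin]

theorem toScalar_hstar_wedge_dpow (h : Matrix (Fin n) (Fin n) ℝ) {k : ℕ} (hk : k ≤ n) :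
    toScalar (hstar (wedge (dpow (gMetric n) (n - k)) (dpow (ofMatrix h) k))) =
      ((k ! * (n - k)! : ℕ) : ℝ) *
        ∑ s ∈ powersetCard k univ, (h.submatrix (Subtype.val : s → Fin n) Subtype.val).det := by
  rw [toScalar_hstar, wedge_dpow_gMetric_univ (Nat.sub_le n k), Nat.sub_sub_self hk, Nat.cast_mul,
    mul_comm (k ! : ℝ), mul_assoc]
  congr 1
  rw [mul_sum]
  refine sum_congr rfl fun s hs => ?_
  rw [dpow_ofMatrix, Matrix.minorOfCard_self h (mem_powersetCard.1 hs).2]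

theorem sInv_eq_sum_minors (h : Matrix (Fin n) (Fin n) ℝ) {k : ℕ} (hk : k ≤ n) :
    sInv h k =
      ∑ s ∈ powersetCard k univ, (h.submatrix (Subtype.val : s → Fin n) Subtype.val).det := by
  have hcoeff := h.charpoly_coeff_eq_sum_minors k (by simpa using hk)
  rw [Fintype.card_fin] at hcoeff
  rw [sInv, hcoeff, ← mul_assoc, ← pow_add, ← two_mul, pow_mul, neg_one_sq, one_pow, one_mul]

theorem sInv_eq_inv_mul_toScalar (h : Matrix (Fin n) (Fin n) ℝ) {k : ℕ} (hk : k ≤ n) :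
    sInv h k = ((k ! * (n - k)! : ℕ) : ℝ)⁻¹ *
      toScalar (hstar (wedge (dpow (gMetric n) (n - k)) (dpow (ofMatrix h) k))) := by
  rw [sInv_eq_sum_minors h hk, toScalar_hstar_wedge_dpow h hk, inv_mul_cancel_left₀]
  exact_mod_cast (mul_pos k.factorial_pos (n - k).factorial_pos).ne'

theorem det_sub_smul_one_eq_sum_sInv (h : Matrix (Fin n) (Fin n) ℝ) (lam : ℝ) :
    (h - lam • 1).det = ∑ i ∈ range (n + 1), (-1) ^ (n - i) * sInv h i * lam ^ (n - i) := by
  have hcharpoly : (h - lam • 1).det = (-1) ^ n * h.charpoly.eval lam := by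
    rw [Matrix.eval_charpoly, ← neg_sub, Matrix.det_neg, Fintype.card_fin, Matrix.scalar_apply,
      Matrix.smul_one_eq_diagonal]
  have hdeg : h.charpoly.natDegree < n + 1 := by
    rw [Matrix.charpoly_natDegree_eq_dim, Fintype.card_fin]
    exact n.lt_succ_self
  rw [hcharpoly, Polynomial.eval_eq_sum_range' hdeg, ← sum_range_reflect, mul_sum]
  refine sum_congr rfl fun i hi => ?_
  obtain ⟨j, rfl⟩ := Nat.exists_eq_add_of_le (Nat.lt_succ_iff.1 (mem_range.1 hi))
  rw [sInv, show i + j + 1 - 1 - i = j by omega, Nat.add_sub_cancel_left]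
  ring

end DForm

open DForm in
/-- `s_k(h) = (1/(k!(n-k)!)) * (g^{n-k} h^k)`, and equivalently the characteristic
polynomial expansion `det(h-λg) = ∑ (-1)^(n-i) ((1/(i!(n-i)!)) * (g^{n-i} h^i)) λ^(n-i)`. -/
theorem statement1 (n : ℕ) (h : Matrix (Fin n) (Fin n) ℝ) :
    (∀ k : ℕ, 1 ≤ k → k ≤ n →
      sInv h k = ((k.factorial * (n - k).factorial : ℕ) : ℝ)⁻¹ *
        toScalar (hstar (wedge (dpow (gMetric n) (n - k)) (dpow (ofMatrix h) k)))) ∧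
    (∀ lam : ℝ, (h - lam • 1).det =
      ∑ i ∈ Finset.range (n + 1), (-1 : ℝ) ^ (n - i) *
        (((i.factorial * (n - i).factorial : ℕ) : ℝ)⁻¹ *
          toScalar (hstar (wedge (dpow (gMetric n) (n - i)) (dpow (ofMatrix h) i)))) *
        lam ^ (n - i)) := by
  refine ⟨fun k _ hk => sInv_eq_inv_mul_toScalar h hk, fun lam => ?_⟩
  rw [det_sub_smul_one_eq_sum_sInv]
  refine Finset.sum_congr rfl fun i hi => ?_
  rw [sInv_eq_inv_mul_toScalar h (Nat.lt_succ_iff.1 (Finset.mem_range.1 hi))]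
end
end

section
/- Let R be a symmetric (2,2)-double form satisfying the first Bianchi identity on an n-dimensional real inner product space (V,g). Then the Girard–Newton identities hold: c N_{2k}(R) = (n−2k−1)·T_{2k}(R) for 2 ≤ 2k ≤ n−2, and c T_{2k}(R) = (n−2k)·h_{2k}(R) for 2 ≤ 2k ≤ n−1. -/
noncomputable section

open Finset

namespace DForm
variable {n : ℕ}

/-- The Gauss–Bonnet invariant `h_{2k}(R) = c^{2k}(R^k)/(2k)!`. -/
noncomputable def hGB (R : DForm n) (k : ℕ) : ℝ :=
  toScalar (citer (dpow R k) (2 * k)) / ((2 * k).factorial : ℝ)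

/-- The Einstein–Lovelock tensor `T_{2k}(R) = (c^{2k}(R^k)/(2k)!) g - c^{2k-1}(R^k)/(2k-1)!`. -/
noncomputable def TT (R : DForm n) (k : ℕ) : DForm n :=
  (toScalar (citer (dpow R k) (2 * k)) / ((2 * k).factorial : ℝ)) • gMetric n
    - (((2 * k - 1).factorial : ℕ) : ℝ)⁻¹ • citer (dpow R k) (2 * k - 1)

/-- The cofactor transformation
`N_{2k}(R) = c^{2k-2}(R^k)/(2k-2)! - (c^{2k-1}(R^k)/(2k-1)!) g + (c^{2k}(R^k)/(2 (2k)!)) g²`. -/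
noncomputable def NN (R : DForm n) (k : ℕ) : DForm n :=
  (((2 * k - 2).factorial : ℕ) : ℝ)⁻¹ • citer (dpow R k) (2 * k - 2)
    - (((2 * k - 1).factorial : ℕ) : ℝ)⁻¹ • wedge (citer (dpow R k) (2 * k - 1)) (gMetric n)
    + (toScalar (citer (dpow R k) (2 * k)) / (2 * ((2 * k).factorial : ℝ))) •
        dpow (gMetric n) 2

end DForm

/-!
The whole computation rests on one formula: for every `(1,1)`-double form `b`,
`c (b g) = (c b) g + (n - 2) b`, and in particular `c (g²) = 2 (n - 1) g`. Applying it to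
`b = c^{2k-1}(R^k)`, whose trace is `c^{2k}(R^k)`, both identities reduce to the factorial
relations `(2k)! = 2k (2k-1)!` and `(2k-1)! = (2k-1) (2k-2)!`.
-/

namespace DForm

variable {n : ℕ}

theorem contr_add (ω₁ ω₂ : DForm n) : contr (ω₁ + ω₂) = contr ω₁ + contr ω₂ := by
  funext I J
  simp only [contr, Pi.add_apply, ← sum_add_distrib]
  refine sum_congr rfl fun j _ => ?_
  split <;> ring

theorem contr_sub (ω₁ ω₂ : DForm n) : contr (ω₁ - ω₂) = contr ω₁ - contr ω₂ := by
  funext I J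
  simp only [contr, Pi.sub_apply, ← sum_sub_distrib]
  refine sum_congr rfl fun j _ => ?_
  split <;> ring

theorem contr_smul (a : ℝ) (ω : DForm n) : contr (a • ω) = a • contr ω := by
  funext I J
  simp only [contr, Pi.smul_apply, smul_eq_mul, mul_sum]
  refine sum_congr rfl fun j _ => ?_
  split <;> ring

theorem toScalar_contr (ω : DForm n) : toScalar (contr ω) = ∑ j : Fin n, ω {j} {j} := by
  simp [toScalar, contr, shuffleSign]

theorem toScalar_contr_gMetric : toScalar (contr (gMetric n)) = n := by
  simp [toScalar_contr, gMetric]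

theorem gMetric_singleton (a b : Fin n) : gMetric n {a} {b} = if a = b then 1 else 0 := by
  simp [gMetric, singleton_inj]

theorem wedge_dpow_zero (ω ω' : DForm n) : wedge ω (dpow ω' 0) = ω := by
  have sdiff_ne {A I : Finset (Fin n)} (hA : A ∈ I.powerset) (hAI : A ≠ I) : I \ A ≠ ∅ :=
    fun h => hAI (Subset.antisymm (mem_powerset.1 hA) (sdiff_eq_empty_iff_subset.1 h))
  funext I J
  rw [wedge, sum_eq_single_of_mem I (mem_powerset_self I), sum_eq_single_of_mem J
    (mem_powerset_self J)]
  · simp [dpow, shuffleSign]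
  · intro B hB hBJ
    simp [dpow, sdiff_ne hB hBJ]
  · intro A hA hAI
    simp [dpow, sdiff_ne hA hAI]

theorem dpow_two (ω : DForm n) : dpow ω 2 = wedge ω ω :=
  congrArg (wedge ω) (wedge_dpow_zero ω ω)

section Degree

variable {ω ω₁ ω₂ : DForm n} {p q r s : ℕ}

theorem IsOfDeg.apply_eq_zero (h : IsOfDeg ω p q) {I J : Finset (Fin n)}
    (hIJ : ¬(I.card = p ∧ J.card = q)) : ω I J = 0 := by
  by_contra h0
  exact hIJ (h I J h0)

theorem isOfDeg_gMetric : IsOfDeg (gMetric n) 1 1 := by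
  intro I J hne
  unfold gMetric at hne
  split_ifs at hne with h
  · exact ⟨h.2, h.1 ▸ h.2⟩
  · exact absurd rfl hne

theorem IsOfDeg.wedge (h₁ : IsOfDeg ω₁ p q) (h₂ : IsOfDeg ω₂ r s) :
    IsOfDeg (wedge ω₁ ω₂) (p + r) (q + s) := by
  intro I J hne
  obtain ⟨A, hA, hA2⟩ := exists_ne_zero_of_sum_ne_zero hne
  obtain ⟨B, hB, hB2⟩ := exists_ne_zero_of_sum_ne_zero hA2
  obtain ⟨hA₁, hB₁⟩ := h₁ A B fun h0 => hB2 (by simp [h0])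
  obtain ⟨hA₂, hB₂⟩ := h₂ (I \ A) (J \ B) fun h0 => hB2 (by simp [h0])
  have := card_sdiff_add_card_eq_card (mem_powerset.1 hA)
  have := card_sdiff_add_card_eq_card (mem_powerset.1 hB)
  omega

theorem IsOfDeg.dpow (h : IsOfDeg ω p q) (k : ℕ) : IsOfDeg (dpow ω k) (k * p) (k * q) := by
  induction k with
  | zero =>
    intro I J hne
    simp only [DForm.dpow, ne_eq, ite_eq_right_iff, not_forall] at hne
    simp [hne.1.1, hne.1.2]
  | succ k ih =>
    rw [Nat.succ_mul, Nat.succ_mul, Nat.add_comm _ p, Nat.add_comm _ q]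
    exact h.wedge ih

theorem IsOfDeg.contr (h : IsOfDeg ω p q) : IsOfDeg (contr ω) (p - 1) (q - 1) := by
  intro I J hne
  obtain ⟨j, -, hj⟩ := exists_ne_zero_of_sum_ne_zero hne
  split_ifs at hj with hm
  · exact absurd rfl hj
  · push Not at hm
    obtain ⟨e1, e2⟩ := h (insert j I) (insert j J) fun h0 => hj (by simp [h0])
    rw [card_insert_of_notMem hm.1] at e1
    rw [card_insert_of_notMem hm.2] at e2
    omega

theorem IsOfDeg.citer (h : IsOfDeg ω p q) (m : ℕ) : IsOfDeg (citer ω m) (p - m) (q - m) := by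
  induction m with
  | zero => exact h
  | succ m ih =>
    rw [← Nat.sub_sub, ← Nat.sub_sub]
    exact ih.contr

end Degree

theorem sum_powerset_singleton {α M : Type*} [DecidableEq α] [AddCommMonoid M] (a : α)
    (f : Finset α → M) : ∑ t ∈ ({a} : Finset α).powerset, f t = f ∅ + f {a} := by
  rw [← insert_empty, sum_powerset_insert (notMem_empty a)]
  simp

theorem shuffleSign_singleton (a b : Fin n) :
    shuffleSign ({a} : Finset (Fin n)) {b} = if b < a then -1 else 1 := by
  simp only [shuffleSign, sum_singleton, filter_singleton]
  split <;> simp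

theorem shuffleSign_singleton_mul_swap {a b : Fin n} (h : a ≠ b) :
    shuffleSign ({a} : Finset (Fin n)) {b} * shuffleSign {b} {a} = -1 := by
  simp only [shuffleSign_singleton]
  rcases h.lt_or_gt with h | h
  · simp [h, h.not_gt]
  · simp [h, h.not_gt]

theorem shuffleSign_singleton_mul_self (a b : Fin n) :
    shuffleSign ({a} : Finset (Fin n)) {b} * shuffleSign {a} {b} = 1 := by
  rw [shuffleSign_singleton]
  split <;> ring

section ContrWedgeMetric

variable {b : DForm n}

theorem wedge_gMetric_insert (hb : IsOfDeg b 1 1) {x y j : Fin n} (hjx : j ≠ x) (hjy : j ≠ y) :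
    wedge b (gMetric n) (insert j {x}) (insert j {y}) =
      (if x = y then shuffleSign {j} {x} * shuffleSign {j} {y} * b {j} {j} else 0)
      + shuffleSign {x} {j} * shuffleSign {y} {j} * b {x} {y} := by
  have hjx' : j ∉ ({x} : Finset (Fin n)) := by simpa using hjx
  have hjy' : j ∉ ({y} : Finset (Fin n)) := by simpa using hjy
  have hb0 {A B : Finset (Fin n)} (h : A.card ≠ 1 ∨ B.card ≠ 1) : b A B = 0 :=
    hb.apply_eq_zero (by tauto)
  unfold wedge
  simp only [sum_powerset_insert hjx', sum_powerset_insert hjy', sum_powerset_singleton,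
    insert_empty]
  simp only [hb0 (A := ∅) (by simp), hb0 (B := ∅) (by simp),
    hb0 (A := insert j {x}) (by simp [card_insert_of_notMem hjx']),
    hb0 (B := insert j {y}) (by simp [card_insert_of_notMem hjy']),
    mul_zero, zero_mul, add_zero, zero_add]
  have hx : ({j, x} : Finset (Fin n)) \ {x} = {j} := by grind
  have hy : ({j, y} : Finset (Fin n)) \ {y} = {j} := by grind
  have hx' : ({j, x} : Finset (Fin n)) \ {j} = {x} := by grind
  have hy' : ({j, y} : Finset (Fin n)) \ {j} = {y} := by grind
  simp only [hx, hy, hx', hy', gMetric_singleton, if_neg hjx.symm, if_neg hjy]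
  simp [add_comm]

theorem shuffleSign_mul_wedge_gMetric_insert (hb : IsOfDeg b 1 1) {x y j : Fin n} (hjx : j ≠ x)
    (hjy : j ≠ y) :
    shuffleSign {j} {x} * shuffleSign {j} {y} *
        wedge b (gMetric n) (insert j {x}) (insert j {y}) =
      (if x = y then b {j} {j} else 0) + b {x} {y} := by
  have hsign : shuffleSign {j} {x} * shuffleSign {j} {y} *
      (shuffleSign {x} {j} * shuffleSign {y} {j}) = 1 := by
    linear_combination shuffleSign {j} {y} * shuffleSign {y} {j} *
      shuffleSign_singleton_mul_swap hjx - shuffleSign_singleton_mul_swap hjy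
  rw [wedge_gMetric_insert hb hjx hjy]
  split_ifs with hxy
  · subst hxy
    linear_combination (shuffleSign {j} {x} * shuffleSign {j} {x} + 1) * b {j} {j} *
      shuffleSign_singleton_mul_self j x + b {x} {x} * hsign
  · linear_combination b {x} {y} * hsign

theorem contr_wedge_gMetric_singleton (hb : IsOfDeg b 1 1) (x y : Fin n) :
    contr (wedge b (gMetric n)) {x} {y} =
      (if x = y then toScalar (contr b) else 0) + ((n : ℝ) - 2) * b {x} {y} := by
  have hsum : contr (wedge b (gMetric n)) {x} {y} =
      ∑ j ∈ ({x, y} : Finset (Fin n))ᶜ, ((if x = y then b {j} {j} else 0) + b {x} {y}) := by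
    rw [contr, ← sum_compl_add_sum {x, y}, sum_eq_zero (s := {x, y}) fun j hj => if_pos ?_,
      add_zero]
    · refine sum_congr rfl fun j hj => ?_
      have hj : j ≠ x ∧ j ≠ y := by simpa [not_or] using hj
      rw [if_neg (by simpa using hj), shuffleSign_mul_wedge_gMetric_insert hb hj.1 hj.2]
    · simpa using hj
  have hcard : (#({x, y} : Finset (Fin n))ᶜ : ℝ) + #({x, y} : Finset (Fin n)) = n := by
    exact_mod_cast (card_compl_add_card _).trans (Fintype.card_fin n)
  rw [hsum, sum_add_distrib, sum_const, nsmul_eq_mul]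
  rcases eq_or_ne x y with rfl | hxy
  · have htrace :
        ∑ j ∈ ({x} : Finset (Fin n))ᶜ, b {j} {j} = toScalar (contr b) - b {x} {x} := by
      rw [toScalar_contr, ← sum_compl_add_sum {x}, sum_singleton, add_sub_cancel_right]
    simp only [insert_eq_of_mem (mem_singleton_self x), if_true, htrace] at hcard ⊢
    rw [card_singleton] at hcard
    linear_combination b {x} {x} * hcard
  · simp only [if_neg hxy, sum_const_zero, zero_add]
    rw [card_pair hxy] at hcard
    linear_combination b {x} {y} * hcard

theorem contr_wedge_gMetric (hb : IsOfDeg b 1 1) :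
    contr (wedge b (gMetric n)) = toScalar (contr b) • gMetric n + ((n : ℝ) - 2) • b := by
  funext I J
  by_cases hIJ : I.card = 1 ∧ J.card = 1
  · obtain ⟨x, rfl⟩ := card_eq_one.mp hIJ.1
    obtain ⟨y, rfl⟩ := card_eq_one.mp hIJ.2
    simp [contr_wedge_gMetric_singleton hb, gMetric_singleton]
  · have hdeg : IsOfDeg (contr (wedge b (gMetric n))) 1 1 := (hb.wedge isOfDeg_gMetric).contr
    simp [hdeg.apply_eq_zero hIJ, isOfDeg_gMetric.apply_eq_zero hIJ, hb.apply_eq_zero hIJ]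

theorem contr_dpow_gMetric_two :
    contr (dpow (gMetric n) 2) = (2 * ((n : ℝ) - 1)) • gMetric n := by
  rw [dpow_two, contr_wedge_gMetric isOfDeg_gMetric, toScalar_contr_gMetric, ← add_smul]
  ring_nf

end ContrWedgeMetric

theorem citer_succ (ω : DForm n) (m : ℕ) : citer ω (m + 1) = contr (citer ω m) := rfl

variable {R : DForm n} {k : ℕ}

theorem contr_NN (hR : IsOfDeg R 2 2) (hk : 1 ≤ k) :
    contr (NN R k) = ((n : ℝ) - 2 * k - 1) • TT R k := by
  obtain ⟨j, rfl⟩ : ∃ j, k = j + 1 := ⟨k - 1, by omega⟩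
  have hB : IsOfDeg (citer (dpow R (j + 1)) (2 * j + 1)) 1 1 := by
    have := (hR.dpow (j + 1)).citer (2 * j + 1)
    rwa [show (j + 1) * 2 - (2 * j + 1) = 1 by omega] at this
  unfold NN TT
  rw [show 2 * (j + 1) - 2 = 2 * j by omega, show 2 * (j + 1) - 1 = 2 * j + 1 by omega,
    show 2 * (j + 1) = 2 * j + 1 + 1 by omega, contr_add, contr_sub, contr_smul, contr_smul,
    contr_smul, ← citer_succ, contr_wedge_gMetric hB, contr_dpow_gMetric_two, ← citer_succ,
    citer_succ _ (2 * j + 1)]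
  funext I J
  simp only [Pi.add_apply, Pi.sub_apply, Pi.smul_apply, smul_eq_mul, Nat.factorial_succ]
  push_cast
  field_simp
  ring

theorem toScalar_contr_TT (hk : 1 ≤ k) :
    toScalar (contr (TT R k)) = ((n : ℝ) - 2 * k) * hGB R k := by
  obtain ⟨j, rfl⟩ : ∃ j, k = j + 1 := ⟨k - 1, by omega⟩
  unfold TT hGB
  rw [show 2 * (j + 1) - 1 = 2 * j + 1 by omega, show 2 * (j + 1) = 2 * j + 1 + 1 by omega,
    contr_sub, contr_smul, contr_smul, citer_succ _ (2 * j + 1)]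
  have hg := toScalar_contr_gMetric (n := n)
  unfold toScalar at hg ⊢
  simp only [Pi.sub_apply, Pi.smul_apply, smul_eq_mul, hg, Nat.factorial_succ]
  push_cast
  field_simp
  ring

end DForm

open DForm in
theorem statement14_general (n : ℕ) (R : DForm n)
    (hgr : IsOfDeg R 2 2) (k : ℕ) (hk : 1 ≤ k) :
    (2 * k + 2 ≤ n → contr (NN R k) = ((n - 2 * k - 1 : ℕ) : ℝ) • TT R k) ∧
    (2 * k + 1 ≤ n → toScalar (contr (TT R k)) = ((n - 2 * k : ℕ) : ℝ) * hGB R k) := by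
  refine ⟨fun hn => ?_, fun hn => ?_⟩
  · rw [Nat.cast_sub (by omega), Nat.cast_sub (by omega), Nat.cast_mul, Nat.cast_ofNat,
      Nat.cast_one]
    exact contr_NN hgr hk
  · rw [Nat.cast_sub (by omega), Nat.cast_mul, Nat.cast_ofNat]
    exact toScalar_contr_TT hk

open DForm in
/-- Girard–Newton identities: `c N_{2k}(R) = (n-2k-1) T_{2k}(R)` for `2 ≤ 2k ≤ n-2` and
`c T_{2k}(R) = (n-2k) h_{2k}(R)` for `2 ≤ 2k ≤ n-1`. -/
theorem statement14 (n : ℕ) (R : DForm n) (hsym : IsSym R) (hb : Bianchi2 R)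
    (hgr : IsOfDeg R 2 2) (k : ℕ) (hk : 1 ≤ k) :
    (2 * k + 2 ≤ n → contr (NN R k) = ((n - 2 * k - 1 : ℕ) : ℝ) • TT R k) ∧
    (2 * k + 1 ≤ n → toScalar (contr (TT R k)) = ((n - 2 * k : ℕ) : ℝ) * hGB R k) :=
  statement14_general n R hgr k hk
end
end
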